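/- arXiv:2111.05030 — 3 statements merged into one kernel-verified Lean document; each statement's English description precedes it below -/
import Mathlib

section
/- For every integer r ≥ 1, Var(μ^(r)) ≤ b²·λ(r). -/
open Filter Topology MeasureTheory

noncomputable section

/-- Sum of the base-`b` digits of `n`. -/
def digitSum (b n : ℕ) : ℕ := (Nat.digits b n).sum

/-- `Δ^(r)(n) = s(n+r) - s(n)`, the variation of the base-`b` digit sum when adding `r`. -/
def delta (b r n : ℕ) : ℤ := (digitSum b (n + r) : ℤ) - (digitSum b n : ℤ)

/-- Number of non-zero blocks of a digit list (least significant digit first). -/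
def nzBlockCount (b : ℕ) : List ℕ → ℕ
  | [] => 0
  | [d] => if d = 0 then 0 else 1
  | d :: e :: l =>
      (if d = e ∧ (d = 0 ∨ d = b - 1) then 0 else if d = 0 then 0 else 1) + nzBlockCount b (e :: l)

/-- `λ(r)`: the number of non-zero blocks in the base-`b` expansion of `r`. -/
def lamb (b r : ℕ) : ℕ := nzBlockCount b (Nat.digits b r)

/-!
Let `A_m(t) = ∑_{n < b^m} (s((n + t) mod b^m) - s(n))²`. For `n < b^m` the difference
`Δ^(r)(n)` agrees with the cyclic one except for the `r` values of `n` where adding `r` wraps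
around, so `∑_{n < b^m} Δ^(r)(n)² ≤ A_m(r) + r(2r + 1)` and it suffices to show
`A_m(r) ≤ b² λ(r) b^m` once `b^m > r`.

Split off the lowest digits `e` of `t` and `n₀` of `n`: a carry occurs for exactly `e` values of
`n₀`, and the cross terms vanish because cyclic differences have mean zero, whence
`A_{m+1}(e + b t) = (b - e) (b^m e² + A_m(t)) + e (b^m (b - e)² + A_m(t + 1))`.
So the pair `(A_m(t), A_m(t + 1))` is controlled digit by digit: `A_m(t) ≤ b² λ b^m` and
`A_m(t + 1) ≤ (b² λ + c) b^m`, where the correction `c` is `b² - b`, `-b` or `0` according as the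
lowest digit of `t` is `0`, `b - 1` or neither. Prepending a digit that opens a new non-zero block
costs at most `b² b^(m+1)`; a `0`, or a `b - 1` continuing a block of `b - 1`'s, costs nothing.
-/

open Finset

theorem Finset.sum_range_mul_eq_sum_sum {M : Type*} [AddCommMonoid M] (f : ℕ → M) (a c : ℕ) :
    ∑ n ∈ range (a * c), f n = ∑ i ∈ range a, ∑ j ∈ range c, f (j + c * i) := by
  simp only [sum_range]
  rw [← Fintype.sum_prod_type']
  exact (Fintype.sum_equiv finProdFinEquiv _ _ fun _ => rfl).symm

theorem Finset.sum_range_add_mod {M : Type*} [AddCommMonoid M] (f : ℕ → M) {N : ℕ} (hN : N ≠ 0)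
    (t : ℕ) : ∑ n ∈ range N, f ((n + t) % N) = ∑ n ∈ range N, f n := by
  have : NeZero N := ⟨hN⟩
  simp only [sum_range]
  exact Fintype.sum_equiv (Equiv.addRight (Fin.ofNat N t)) _ _ fun i => by
    simp [Fin.val_add]

theorem sum_sq_mul_card_filter_le {ι : Type*} (s : Finset ι) (f : ι → ℤ) (S : Finset ℤ) :
    ∑ d ∈ S, (d : ℝ) ^ 2 * #{n ∈ s | f n = d} ≤ ∑ n ∈ s, (f n : ℝ) ^ 2 := by
  calc ∑ d ∈ S, (d : ℝ) ^ 2 * #{n ∈ s | f n = d}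
      = ∑ d ∈ S, ∑ n ∈ s with f n = d, (f n : ℝ) ^ 2 := by
        refine sum_congr rfl fun d _ => ?_
        rw [sum_congr rfl fun n hn => by rw [(mem_filter.1 hn).2], sum_const, nsmul_eq_mul,
          mul_comm]
    _ = ∑ n ∈ s with f n ∈ S, (f n : ℝ) ^ 2 := sum_fiberwise_eq_sum_filter _ _ _ _
    _ ≤ ∑ n ∈ s, (f n : ℝ) ^ 2 :=
        sum_le_sum_of_subset_of_nonneg (filter_subset _ _) fun _ _ _ => sq_nonneg _

theorem second_moment_le_of_sum_sq_le {f : ℕ → ℤ} {μ : ℤ → ℝ} {V C D : ℝ} {N : ℕ → ℕ}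
    (hμ : ∀ d, Tendsto (fun M : ℕ => (((range M).filter fun n => f n = d).card : ℝ) / M)
      atTop (𝓝 (μ d)))
    (hV : HasSum (fun d : ℤ => (d : ℝ) ^ 2 * μ d) V) (hN : Tendsto N atTop atTop)
    (hsum : ∀ k, ∑ n ∈ range (N k), (f n : ℝ) ^ 2 ≤ C * N k + D) : V ≤ C := by
  refine hasSum_le_of_sum_le hV fun S => ?_
  have hN' : Tendsto (fun k => (N k : ℝ)) atTop atTop := tendsto_natCast_atTop_atTop.comp hN
  have hlim : Tendsto (fun k => ∑ d ∈ S, (d : ℝ) ^ 2 * (#{n ∈ range (N k) | f n = d} / N k))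
      atTop (𝓝 (∑ d ∈ S, (d : ℝ) ^ 2 * μ d)) :=
    tendsto_finsetSum _ fun d _ => ((hμ d).comp hN).const_mul _
  have hbound : Tendsto (fun k => C + D / N k) atTop (𝓝 C) := by
    simpa using tendsto_const_nhds.add (tendsto_const_nhds.div_atTop hN')
  refine le_of_tendsto_of_tendsto hlim hbound ?_
  filter_upwards [hN'.eventually_gt_atTop 0] with k hk
  simp only [mul_div_assoc', ← sum_div]
  rw [div_le_iff₀ hk, add_mul, div_mul_cancel₀ _ hk.ne']
  exact (sum_sq_mul_card_filter_le _ f S).trans (hsum k)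

theorem digitSum_add_base_mul {b a : ℕ} (hb : 2 ≤ b) (ha : a < b) (k : ℕ) :
    digitSum b (a + b * k) = a + digitSum b k := by
  by_cases h : a = 0 ∧ k = 0
  · simp [h, digitSum]
  · simp [digitSum, Nat.digits_add b (by omega) a k ha (not_and_or.1 h)]

theorem digitSum_add_base_pow {b m x : ℕ} (hb : 2 ≤ b) (hx : x < b ^ m) :
    digitSum b (x + b ^ m) = digitSum b x + 1 := by
  have hlen := (Nat.digits_length_le_iff (by omega) x).2 hx
  have := Nat.digits_append_zeroes_append_digits (n := x) (k := m - (b.digits x).length) (m := 1)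
    (by omega : 1 < b) one_pos
  rw [Nat.add_sub_cancel' hlen, mul_one] at this
  simp [digitSum, ← this, Nat.digits_of_lt b 1 one_ne_zero (by omega)]

def cyclicDelta (b m t n : ℕ) : ℤ := digitSum b ((n + t) % b ^ m) - digitSum b n

def cyclicSqSum (b m t : ℕ) : ℤ := ∑ n ∈ range (b ^ m), cyclicDelta b m t n ^ 2

theorem sum_cyclicDelta (b m t : ℕ) : ∑ n ∈ range (b ^ m), cyclicDelta b m t n = 0 := by
  rcases eq_or_ne (b ^ m) 0 with h | h
  · simp [h]
  · simp only [cyclicDelta, sum_sub_distrib]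
    rw [sum_range_add_mod (fun n => (digitSum b n : ℤ)) h, sub_self]

theorem sum_sq_add_cyclicDelta (b m t : ℕ) (c : ℤ) :
    ∑ n ∈ range (b ^ m), (c + cyclicDelta b m t n) ^ 2 = b ^ m * c ^ 2 + cyclicSqSum b m t := by
  simp [add_sq, sum_add_distrib, ← mul_sum, sum_cyclicDelta, cyclicSqSum]

theorem cyclicDelta_add_base_mul {b n₀ e : ℕ} (hb : 2 ≤ b) (hn₀ : n₀ < b) (m t n : ℕ) :
    cyclicDelta b (m + 1) (e + b * t) (n₀ + b * n) =
      (((n₀ + e) % b : ℕ) - n₀ : ℤ) + cyclicDelta b m (t + (n₀ + e) / b) n := by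
  have hsplit : n₀ + b * n + (e + b * t) = (n₀ + e) % b + b * (n + (t + (n₀ + e) / b)) := by
    have := Nat.mod_add_div (n₀ + e) b
    linear_combination this.symm
  have hu : (n₀ + e) % b < b := Nat.mod_lt _ (by omega)
  have hmod : ((n₀ + e) % b + b * (n + (t + (n₀ + e) / b))) % b ^ (m + 1) =
      (n₀ + e) % b + b * ((n + (t + (n₀ + e) / b)) % b ^ m) := by
    rw [pow_succ', Nat.mod_mul, Nat.add_mul_mod_self_left, Nat.mod_eq_of_lt hu,
      Nat.add_mul_div_left _ _ (by omega), Nat.div_eq_of_lt hu, zero_add]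
  simp only [cyclicDelta, hsplit, hmod, digitSum_add_base_mul hb hu, digitSum_add_base_mul hb hn₀]
  push_cast
  ring

theorem cyclicSqSum_succ {b e : ℕ} (hb : 2 ≤ b) (he : e ≤ b) (m t : ℕ) :
    cyclicSqSum b (m + 1) (e + b * t) =
      (b - e : ℤ) * (b ^ m * e ^ 2 + cyclicSqSum b m t) +
        e * (b ^ m * (b - e) ^ 2 + cyclicSqSum b m (t + 1)) := by
  have hdigit : ∀ n₀ < b, ∑ n ∈ range (b ^ m), cyclicDelta b (m + 1) (e + b * t) (n₀ + b * n) ^ 2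
      = b ^ m * (((n₀ + e) % b : ℕ) - n₀ : ℤ) ^ 2 + cyclicSqSum b m (t + (n₀ + e) / b) := by
    intro n₀ hn₀
    simp only [cyclicDelta_add_base_mul hb hn₀, sum_sq_add_cyclicDelta]
  rw [cyclicSqSum, pow_succ, sum_range_mul_eq_sum_sum, sum_comm,
    sum_congr rfl fun n₀ hn₀ => hdigit n₀ (mem_range.1 hn₀), range_eq_Ico,
    ← sum_Ico_consecutive _ (Nat.zero_le (b - e)) (Nat.sub_le b e)]
  have hlow : ∀ n₀ ∈ Ico 0 (b - e), b ^ m * (((n₀ + e) % b : ℕ) - n₀ : ℤ) ^ 2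
      + cyclicSqSum b m (t + (n₀ + e) / b) = b ^ m * e ^ 2 + cyclicSqSum b m t := by
    intro n₀ hn₀
    have hlt : n₀ + e < b := by simp at hn₀; omega
    rw [Nat.mod_eq_of_lt hlt, Nat.div_eq_of_lt hlt, add_zero]
    push_cast
    ring
  have hhigh : ∀ n₀ ∈ Ico (b - e) b, b ^ m * (((n₀ + e) % b : ℕ) - n₀ : ℤ) ^ 2
      + cyclicSqSum b m (t + (n₀ + e) / b) = b ^ m * (b - e) ^ 2 + cyclicSqSum b m (t + 1) := by
    intro n₀ hn₀
    simp only [mem_Ico] at hn₀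
    have hmod : (n₀ + e) % b = n₀ + e - b := by
      rw [Nat.mod_eq_sub_mod (by omega), Nat.mod_eq_of_lt (by omega)]
    have hdiv : (n₀ + e) / b = 1 := Nat.div_eq_of_lt_le (by omega) (by omega)
    rw [hmod, hdiv, Nat.cast_sub (by omega)]
    push_cast
    ring
  rw [sum_congr rfl hlow, sum_congr rfl hhigh, sum_const, sum_const, Nat.card_Ico,
    Nat.card_Ico, nsmul_eq_mul, nsmul_eq_mul, Nat.sub_zero, Nat.sub_sub_self he, Nat.cast_sub he]

theorem cyclicSqSum_succ_le {b e : ℕ} (hb : 2 ≤ b) (he : e ≤ b) {m t : ℕ} {Λ c : ℤ}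
    (hX : cyclicSqSum b m t ≤ Λ * b ^ m) (hY : cyclicSqSum b m (t + 1) ≤ (Λ + c) * b ^ m) :
    cyclicSqSum b (m + 1) (e + b * t) ≤ (b * Λ + b * e * (b - e) + e * c) * b ^ m := by
  have he' : (e : ℤ) ≤ b := by exact_mod_cast he
  rw [cyclicSqSum_succ hb he]
  nlinarith [mul_le_mul_of_nonneg_left hX (sub_nonneg.2 he'),
    mul_le_mul_of_nonneg_left hY (Int.natCast_nonneg e)]

theorem nzBlockCount_cons (b d : ℕ) (M : List ℕ) :
    nzBlockCount b (d :: M) = nzBlockCount b M +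
      if d = 0 ∨ (d = b - 1 ∧ M.head? = some (b - 1)) then 0 else 1 := by
  rcases M with _ | ⟨e, l⟩
  · simp [nzBlockCount]
  · simp only [nzBlockCount, List.head?_cons, Option.some.injEq]
    split_ifs <;> omega

theorem nzBlockCount_append_replicate_zero (b k : ℕ) (L : List ℕ) :
    nzBlockCount b (L ++ List.replicate k 0) = nzBlockCount b L := by
  induction L with
  | nil =>
    induction k with
    | zero => rfl
    | succ k ih => simpa [List.replicate_succ, nzBlockCount_cons] using ih
  | cons d M ih =>
    rw [List.cons_append, nzBlockCount_cons, nzBlockCount_cons, ih]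
    rcases M with _ | ⟨e, l⟩ <;> cases k <;> simp [List.replicate_succ]
    split_ifs <;> omega

def succCorrection (b : ℕ) : List ℕ → ℤ
  | [] => 0
  | d :: _ => if d = 0 then b ^ 2 - b else if d = b - 1 then -b else 0

theorem succCorrection_le (b : ℕ) (L : List ℕ) : succCorrection b L ≤ b ^ 2 - b := by
  have hb : (0 : ℤ) ≤ b := Nat.cast_nonneg b
  rcases L with _ | ⟨d, L⟩
  · simp only [succCorrection]; nlinarith
  · simp only [succCorrection]; split_ifs <;> nlinarith

def CyclicBound (b m t : ℕ) (Λ c : ℤ) : Prop :=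
  cyclicSqSum b m t ≤ Λ * b ^ m ∧ cyclicSqSum b m (t + 1) ≤ (Λ + c) * b ^ m

namespace CyclicBound

variable {b m t : ℕ} {Λ c : ℤ}

theorem cons {d : ℕ} (hb : 2 ≤ b) (hd : d < b)
    (h : CyclicBound b m t Λ c) (hc : c ≤ b ^ 2 - b) :
    CyclicBound b (m + 1) (d + b * t) (Λ + b ^ 2) (if d = b - 1 then -b else 0) := by
  have hX := cyclicSqSum_succ_le hb hd.le h.1 h.2
  have hY := cyclicSqSum_succ_le (e := d + 1) hb hd h.1 h.2
  have hB : (0 : ℤ) ≤ b ^ m := by positivity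
  have hcost : ∀ e : ℤ, 0 ≤ e → e ≤ b → (b * e * (b - e) + e * c) * b ^ m ≤ b ^ 3 * b ^ m :=
    fun e he₀ he => mul_le_mul_of_nonneg_right
      (by nlinarith [mul_le_mul_of_nonneg_left hc he₀, sq_nonneg ((b : ℤ) - e)]) hB
  rw [CyclicBound, add_right_comm, pow_succ _ m]
  refine ⟨by nlinarith [hcost d (by positivity) (by omega)], ?_⟩
  push_cast at hY
  split_ifs with hdb
  · rw [show (d : ℤ) + 1 = b by omega] at hY
    nlinarith [mul_le_mul_of_nonneg_left hc (by positivity : (0 : ℤ) ≤ b * b ^ m)]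
  · nlinarith [hcost (d + 1) (by positivity) (by omega)]

theorem cons_zero (hb : 2 ≤ b) (h : CyclicBound b m t Λ c) (hc : c ≤ b ^ 2 - b) :
    CyclicBound b (m + 1) (b * t) Λ (b ^ 2 - b) := by
  have hbZ : (2 : ℤ) ≤ b := by exact_mod_cast hb
  have hX := cyclicSqSum_succ_le hb (Nat.zero_le b) h.1 h.2
  have hY := cyclicSqSum_succ_le hb (by omega : 1 ≤ b) h.1 h.2
  have hB : (0 : ℤ) ≤ b ^ m := by positivity
  have hpos : (0 : ℤ) ≤ b * (b - 1) * (b - 2) := by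
    apply mul_nonneg (mul_nonneg _ _) _ <;> linarith
  rw [zero_add] at hX
  rw [add_comm 1] at hY
  push_cast at hX hY
  constructor <;> rw [pow_succ _ m]
  · linarith
  · nlinarith [mul_nonneg hB hpos, mul_le_mul_of_nonneg_right hc hB]

theorem cons_base_sub_one {d : ℕ} (hb : 2 ≤ b) (hd : d + 1 = b) (h : CyclicBound b m t Λ (-b)) :
    CyclicBound b (m + 1) (d + b * t) Λ (-b) := by
  have hX := cyclicSqSum_succ_le hb (by omega : d ≤ b) h.1 h.2
  have hY := cyclicSqSum_succ_le hb (by omega : d + 1 ≤ b) h.1 h.2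
  rw [show (d : ℤ) = b - 1 by omega] at hX
  rw [hd] at hY
  rw [CyclicBound, add_right_comm, hd, pow_succ _ m]
  constructor <;> linarith

end CyclicBound

theorem cyclicBound_ofDigits {b : ℕ} (hb : 2 ≤ b) (L : List ℕ) (hL : ∀ d ∈ L, d < b) :
    CyclicBound b L.length (Nat.ofDigits b L) (b ^ 2 * nzBlockCount b L) (succCorrection b L) := by
  induction L with
  | nil => simp [CyclicBound, cyclicSqSum, cyclicDelta, digitSum, succCorrection, nzBlockCount]
  | cons d M ih =>
    have h := ih fun x hx => hL x (List.mem_cons_of_mem d hx)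
    have hd : d < b := hL d List.mem_cons_self
    have hc := succCorrection_le b M
    rw [List.length_cons, Nat.ofDigits_cons, nzBlockCount_cons]
    by_cases h0 : d = 0
    · simpa [h0, succCorrection] using h.cons_zero hb hc
    by_cases hmerge : d = b - 1 ∧ M.head? = some (b - 1)
    · obtain ⟨hdb, hhead⟩ := hmerge
      have hcM : succCorrection b M = -b := by
        obtain ⟨l, rfl⟩ := List.head?_eq_some_iff.1 hhead
        simp [succCorrection]
        omega
      rw [hcM] at h
      simpa [hdb, hhead, succCorrection, show b - 1 ≠ 0 by omega] using
        h.cons_base_sub_one (d := d) hb (by omega)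
    · simpa [h0, hmerge, succCorrection, mul_add] using h.cons hb hd hc

theorem cyclicSqSum_le_lamb {b r m : ℕ} (hb : 2 ≤ b) (hm : (b.digits r).length ≤ m) :
    cyclicSqSum b m r ≤ b ^ 2 * lamb b r * b ^ m := by
  set P := b.digits r ++ List.replicate (m - (b.digits r).length) 0
  have hP : ∀ d ∈ P, d < b := by
    intro d hd
    rcases List.mem_append.1 hd with hd | hd
    · exact Nat.digits_lt_base (by omega) hd
    · rw [List.eq_of_mem_replicate hd]; omega
  have hlen : P.length = m := by simp [P]; omega
  have := (cyclicBound_ofDigits hb P hP).1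
  rwa [hlen, Nat.ofDigits_append_replicate_zero, Nat.ofDigits_digits,
    nzBlockCount_append_replicate_zero] at this

theorem delta_sq_le {b r m n : ℕ} (hb : 2 ≤ b) (hr : r < b ^ m) (hn : n < b ^ m) :
    delta b r n ^ 2 ≤ cyclicDelta b m r n ^ 2 + if b ^ m ≤ n + r then (2 * r + 1 : ℤ) else 0 := by
  split_ifs with hwrap
  · obtain ⟨x, hx⟩ := Nat.exists_eq_add_of_le' hwrap
    have hxlt : x < b ^ m := by omega
    have hsx : (digitSum b x : ℤ) ≤ r := by
      have := Nat.digit_sum_le b x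
      unfold digitSum; omega
    rw [delta, cyclicDelta, hx, digitSum_add_base_pow hb hxlt, Nat.add_mod_right,
      Nat.mod_eq_of_lt hxlt]
    push_cast
    nlinarith [(Nat.cast_nonneg _ : (0 : ℤ) ≤ digitSum b n)]
  · rw [delta, cyclicDelta, Nat.mod_eq_of_lt (by omega : n + r < b ^ m), add_zero]

theorem sum_sq_delta_le {b r m : ℕ} (hb : 2 ≤ b) (hr : r < b ^ m) :
    ∑ n ∈ range (b ^ m), delta b r n ^ 2 ≤ cyclicSqSum b m r + r * (2 * r + 1) := by
  have hwrap : #{n ∈ range (b ^ m) | b ^ m ≤ n + r} = r := by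
    rw [show {n ∈ range (b ^ m) | b ^ m ≤ n + r} = Ico (b ^ m - r) (b ^ m) by ext; simp; omega,
      Nat.card_Ico]
    omega
  calc ∑ n ∈ range (b ^ m), delta b r n ^ 2
      ≤ ∑ n ∈ range (b ^ m), (cyclicDelta b m r n ^ 2 +
          if b ^ m ≤ n + r then 2 * (r : ℤ) + 1 else 0) :=
        sum_le_sum fun n hn => delta_sq_le hb hr (mem_range.1 hn)
    _ = cyclicSqSum b m r + r * (2 * r + 1) := by
        rw [sum_add_distrib, ← sum_filter, sum_const, hwrap, nsmul_eq_mul, cyclicSqSum]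

theorem variance_upper_bound_general (b : ℕ) (hb : 2 ≤ b)
    (μ : ℕ → ℤ → ℝ)
    (hμ : ∀ (r : ℕ) (d : ℤ),
      Tendsto (fun N : ℕ =>
        (((Finset.range N).filter fun n => delta b r n = d).card : ℝ) / N)
        atTop (𝓝 (μ r d)))
    (V : ℕ → ℝ)
    (hV : ∀ r : ℕ, HasSum (fun d : ℤ => (d : ℝ) ^ 2 * μ r d) (V r))
    (r : ℕ) :
    V r ≤ (b : ℝ) ^ 2 * lamb b r := by
  set ℓ := (b.digits r).length
  refine second_moment_le_of_sum_sq_le (hμ r) (hV r) (N := fun k => b ^ (k + ℓ))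
    (D := r * (2 * r + 1)) ((tendsto_pow_atTop_atTop_of_one_lt (by omega)).comp
      (tendsto_add_atTop_nat ℓ)) fun k => ?_
  have hr : r < b ^ (k + ℓ) :=
    (Nat.lt_base_pow_length_digits (by omega)).trans_le (Nat.pow_le_pow_right (by omega) (by omega))
  have := (sum_sq_delta_le hb hr).trans
    (add_le_add_left (cyclicSqSum_le_lamb hb (Nat.le_add_left ℓ k)) _)
  exact_mod_cast this

/-- **Proposition (upper bound).** For every integer `r ≥ 1`, `Var(μ^(r)) ≤ b²·λ(r)`,
where `λ(r)` is the number of non-zero blocks in the base-`b` expansion of `r`. -/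
theorem variance_upper_bound (b : ℕ) (hb : 2 ≤ b)
    (μ : ℕ → ℤ → ℝ)
    (hμ : ∀ (r : ℕ) (d : ℤ),
      Tendsto (fun N : ℕ =>
        (((Finset.range N).filter fun n => delta b r n = d).card : ℝ) / N)
        atTop (𝓝 (μ r d)))
    (V : ℕ → ℝ)
    (hV : ∀ r : ℕ, HasSum (fun d : ℤ => (d : ℝ) ^ 2 * μ r d) (V r))
    (r : ℕ) (hr : 1 ≤ r) :
    V r ≤ (b : ℝ) ^ 2 * lamb b r :=
  variance_upper_bound_general b hb μ hμ V hV r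
end
end

section
/- For every integer r ≥ 1, Var(μ^(r)) ≥ (b/4)·λ(r). -/
open Filter Topology MeasureTheory

noncomputable section

/-!
Split off the last digit, `r = a + b q` with `a < b`. For `n = j + b i` with `j < b`, adding `r`
carries out of the last digit exactly when `j ≥ b - a`, so `Δ^(a+bq)(j + bi)` is `a + Δ^(q)(i)` for
`b - a` values of `j` and `a - b + Δ^(q+1)(i)` for the other `a`. Hence `μ^(a+bq)` is the mixture
`(b-a)/b · μ^(q)(· - a) + a/b · μ^(q+1)(· - (a - b))`. Taking moments, every `μ^(r)` has mass `1`
and mean `0`, and `V(a + bq) = (b-a)/b · V(q) + a/b · V(q+1) + a(b-a)`. Induct along this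
recursion: a non-zero last digit `a` adds at most one block and contributes `a(b-a) ≥ b/4 + a/2`,
while `λ(q) ≤ λ(q+1) + 2` costs at most `a/2`.
-/

open Finset

lemma exists_add_mul_eq {b : ℕ} (hb : 0 < b) (q : ℕ) : ∃ a q', a < b ∧ q = a + b * q' :=
  ⟨q % b, q / b, Nat.mod_lt _ hb, (Nat.mod_add_div q b).symm⟩

section BlockCount

variable {b : ℕ}

lemma nzBlockCount_cons_le (a : ℕ) (L : List ℕ) :
    nzBlockCount b (a :: L) ≤ nzBlockCount b L + 1 := by
  cases L with
  | nil => simp only [nzBlockCount]; split <;> omega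
  | cons e l => simp only [nzBlockCount]; split_ifs <;> omega

lemma nzBlockCount_le_cons (a : ℕ) (L : List ℕ) :
    nzBlockCount b L ≤ nzBlockCount b (a :: L) := by
  cases L with
  | nil => simp [nzBlockCount]
  | cons e l => simp only [nzBlockCount]; omega

lemma nzBlockCount_zero_cons (L : List ℕ) : nzBlockCount b (0 :: L) = nzBlockCount b L := by
  cases L with
  | nil => simp [nzBlockCount]
  | cons e l => simp [nzBlockCount]

lemma nzBlockCount_pred_cons_pred_cons (L : List ℕ) :
    nzBlockCount b ((b - 1) :: (b - 1) :: L) = nzBlockCount b ((b - 1) :: L) := by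
  simp [nzBlockCount]

lemma lamb_add_mul_le (hb : 2 ≤ b) {a : ℕ} (ha : a < b) (q : ℕ) :
    lamb b (a + b * q) ≤ lamb b q + 1 := by
  by_cases h : a = 0 ∧ q = 0
  · simp [h.1, h.2, lamb, nzBlockCount]
  · rw [lamb, Nat.digits_add b hb _ _ ha (by tauto)]
    exact nzBlockCount_cons_le _ _

lemma lamb_le_add_mul (hb : 2 ≤ b) {a : ℕ} (ha : a < b) (q : ℕ) :
    lamb b q ≤ lamb b (a + b * q) := by
  by_cases h : a = 0 ∧ q = 0
  · simp [h.1, h.2]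
  · unfold lamb
    rw [Nat.digits_add b hb _ _ ha (by tauto)]
    exact nzBlockCount_le_cons _ _

lemma lamb_mul (hb : 2 ≤ b) (q : ℕ) : lamb b (b * q) = lamb b q := by
  rcases eq_or_ne q 0 with rfl | hq
  · simp
  · rw [lamb, ← zero_add (b * q), Nat.digits_add b hb _ _ (by omega) (Or.inr hq),
      nzBlockCount_zero_cons, lamb]

lemma lamb_pred_add_mul_pred_add_mul (hb : 2 ≤ b) (q : ℕ) :
    lamb b (b - 1 + b * (b - 1 + b * q)) = lamb b (b - 1 + b * q) := by
  have hdigits : ∀ m, Nat.digits b (b - 1 + b * m) = (b - 1) :: Nat.digits b m := fun m =>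
    Nat.digits_add b hb _ _ (by omega) (by omega)
  rw [lamb, hdigits, hdigits, nzBlockCount_pred_cons_pred_cons, lamb, hdigits]

/-- The `2` is sharp: `(b-1)(b-2)(b-1) + 1 = (b-1)(b-1)0` (most significant digit first). -/
lemma lamb_le_lamb_succ_add_two (hb : 2 ≤ b) (q : ℕ) : lamb b q ≤ lamb b (q + 1) + 2 := by
  induction q using Nat.strong_induction_on with
  | _ q ih =>
  obtain ⟨a, q, ha, rfl⟩ := exists_add_mul_eq (by omega : 0 < b) q
  by_cases hsucc : a + 1 < b
  · rw [show a + b * q + 1 = a + 1 + b * q by ring]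
    have := lamb_add_mul_le hb ha q
    have := lamb_le_add_mul hb hsucc q
    omega
  obtain rfl : a = b - 1 := by omega
  rw [show b - 1 + b * q + 1 = b * (q + 1) by rw [Nat.mul_succ]; omega, lamb_mul hb]
  obtain ⟨e, q', he, rfl⟩ := exists_add_mul_eq (by omega : 0 < b) q
  by_cases he' : e = b - 1
  · subst he'
    rw [lamb_pred_add_mul_pred_add_mul hb]
    have := Nat.le_mul_of_pos_left (b - 1 + b * q') (by omega : 0 < b)
    exact ih _ (by omega)
  · rw [show e + b * q' + 1 = e + 1 + b * q' by ring]
    have := lamb_add_mul_le hb ha (e + b * q')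
    have := lamb_add_mul_le hb he q'
    have := lamb_le_add_mul hb (show e + 1 < b by omega) q'
    omega

end BlockCount

/-- `one` is a separate case: the step for `1 = 1 + b * 0` would need `P 1` itself. -/
theorem Nat.add_mul_induction {b : ℕ} (hb : 2 ≤ b) {P : ℕ → Prop} (zero : P 0) (one : P 1)
    (mul : ∀ q, P q → P (b * q))
    (add_mul : ∀ q a, 0 < a → a < b → P q → P (q + 1) → P (a + b * q)) (r : ℕ) : P r := by
  induction r using Nat.strong_induction_on with
  | _ r ih =>
  obtain ⟨a, q, ha, rfl⟩ := exists_add_mul_eq (by omega : 0 < b) r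
  rcases Nat.eq_zero_or_pos a with rfl | ha0
  · rcases Nat.eq_zero_or_pos q with rfl | hq
    · simpa using zero
    · rw [zero_add]
      exact mul q (ih q (by nlinarith))
  · by_cases h1 : a = 1 ∧ q = 0
    · simpa [h1.1, h1.2] using one
    · exact add_mul q a ha0 ha (ih q (by nlinarith)) (ih (q + 1) (by
        rcases Nat.eq_zero_or_pos q with rfl | hq <;> [omega; nlinarith]))

section DigitRecursion

variable {b : ℕ}

lemma apply_eq_apply_zero_of_add_mul (hb : 2 ≤ b) {f : ℕ → ℝ}
    (hf : ∀ q a, a < b → f (a + b * q) = ((b : ℝ) - a) / b * f q + (a : ℝ) / b * f (q + 1))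
    (r : ℕ) : f r = f 0 := by
  have hb' : (2 : ℝ) ≤ b := by exact_mod_cast hb
  refine Nat.add_mul_induction (P := fun r => f r = f 0) hb rfl ?_ (fun q hq => ?_)
    (fun q a _ ha hq hq1 => ?_) r
  · have h := hf 0 1 (by omega)
    simp only [mul_zero, add_zero, zero_add, Nat.cast_one] at h
    field_simp at h
    have h' : (f 1 - f 0) * ((b : ℝ) - 1) = 0 := by linear_combination h
    rcases mul_eq_zero.1 h' with h' | h' <;> linarith
  · have h := hf q 0 (by omega)
    simp only [zero_add, Nat.cast_zero, sub_zero, zero_div, zero_mul, add_zero] at h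
    rw [h, div_self (by positivity), one_mul, hq]
  · rw [hf q a ha, hq, hq1]
    field_simp
    ring

lemma lamb_le_of_variance_recursion (hb : 2 ≤ b) {V : ℕ → ℝ} (hV0 : V 0 = 0)
    (hV : ∀ q a, a < b →
      V (a + b * q) = ((b : ℝ) - a) / b * V q + (a : ℝ) / b * V (q + 1) + a * ((b : ℝ) - a))
    (r : ℕ) : (b : ℝ) / 4 * lamb b r ≤ V r := by
  have hb' : (2 : ℝ) ≤ b := by exact_mod_cast hb
  refine Nat.add_mul_induction (P := fun r => (b : ℝ) / 4 * lamb b r ≤ V r) hb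
    (by simp [hV0, lamb, nzBlockCount]) ?_ (fun q hq => ?_)
    (fun q a ha0 ha hq hq1 => ?_) r
  · have h := hV 0 1 (by omega)
    have hlamb : (lamb b 1 : ℝ) ≤ 1 := by
      exact_mod_cast (by simpa [lamb, nzBlockCount] using lamb_add_mul_le hb (a := 1) (by omega) 0)
    simp only [mul_zero, add_zero, zero_add, Nat.cast_one, hV0] at h
    field_simp at h
    have hV1 : V 1 = b := by
      have h' : (V 1 - b) * ((b : ℝ) - 1) = 0 := by linear_combination h
      rcases mul_eq_zero.1 h' with h' | h' <;> linarith
    rw [hV1]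
    nlinarith
  · have h := hV q 0 (by omega)
    simp only [zero_add, Nat.cast_zero, sub_zero, zero_div, zero_mul, add_zero] at h
    rw [h, div_self (by positivity), one_mul, lamb_mul hb]
    exact hq
  · have hlamb : (lamb b (a + b * q) : ℝ) ≤ lamb b q + 1 := by
      exact_mod_cast lamb_add_mul_le hb ha q
    have hlamb1 : (lamb b q : ℝ) ≤ lamb b (q + 1) + 2 := by
      exact_mod_cast lamb_le_lamb_succ_add_two hb q
    have ha1 : (1 : ℝ) ≤ a := by exact_mod_cast ha0
    have hab : (a : ℝ) + 1 ≤ b := by exact_mod_cast ha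
    have hgain : (b : ℝ) / 4 + a / 2 ≤ a * ((b : ℝ) - a) := by
      nlinarith [mul_nonneg (sub_nonneg.2 ha1) (by linarith : (0 : ℝ) ≤ b - 1 - a)]
    rw [hV q a ha]
    calc (b : ℝ) / 4 * lamb b (a + b * q) ≤ b / 4 * (lamb b q + 1) := by gcongr
      _ ≤ ((b : ℝ) - a) / b * (b / 4 * lamb b q) + a / b * (b / 4 * lamb b (q + 1))
          + a * ((b : ℝ) - a) := by
        field_simp
        nlinarith [mul_le_mul_of_nonneg_left hlamb1 (Nat.cast_nonneg a)]
      _ ≤ ((b : ℝ) - a) / b * V q + a / b * V (q + 1) + a * ((b : ℝ) - a) := by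
        gcongr
        exact div_nonneg (by linarith) (by positivity)

end DigitRecursion

section Counting

variable {b : ℕ}

lemma digitSum_add_mul (hb : 2 ≤ b) {c : ℕ} (hc : c < b) (m : ℕ) :
    digitSum b (c + b * m) = c + digitSum b m := by
  by_cases h : c = 0 ∧ m = 0
  · simp [h.1, h.2, digitSum]
  · rw [digitSum, Nat.digits_add b hb _ _ hc (by tauto), List.sum_cons, digitSum]

lemma delta_add_mul_of_add_lt (hb : 2 ≤ b) {a j : ℕ} (h : j + a < b) (q i : ℕ) :
    delta b (a + b * q) (j + b * i) = a + delta b q i := by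
  rw [delta, show j + b * i + (a + b * q) = (j + a) + b * (i + q) by ring, delta,
    digitSum_add_mul hb h, digitSum_add_mul hb (by omega : j < b)]
  push_cast
  ring

lemma delta_add_mul_of_le_add (hb : 2 ≤ b) {a j : ℕ} (ha : a < b) (hj : j < b) (h : b ≤ j + a)
    (q i : ℕ) : delta b (a + b * q) (j + b * i) = ((a : ℤ) - b) + delta b (q + 1) i := by
  rw [delta, show j + b * i + (a + b * q) = (j + a - b) + b * (i + (q + 1)) by
      rw [Nat.mul_add, Nat.mul_add, Nat.mul_one]; omega,
    delta, digitSum_add_mul hb (by omega : j + a - b < b), digitSum_add_mul hb hj]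
  push_cast [Nat.cast_sub h]
  ring

lemma sum_range_mul {M : Type*} [AddCommMonoid M] (N : ℕ) (f : ℕ → M) :
    ∑ n ∈ range (b * N), f n = ∑ i ∈ range N, ∑ j ∈ range b, f (j + b * i) := by
  induction N with
  | zero => simp
  | succ N ih =>
    rw [Nat.mul_succ, sum_range_add, ih, sum_range_succ]
    simp only [add_comm]

lemma card_filter_delta_add_mul (hb : 2 ≤ b) {a : ℕ} (ha : a < b) (q : ℕ) (d : ℤ) (N : ℕ) :
    #{n ∈ range (b * N) | delta b (a + b * q) n = d}
      = (b - a) * #{i ∈ range N | delta b q i = d - a}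
        + a * #{i ∈ range N | delta b (q + 1) i = d - ((a : ℤ) - b)} := by
  simp only [card_filter, sum_range_mul, mul_sum, ← sum_add_distrib]
  refine sum_congr rfl fun i _ => ?_
  rw [range_eq_Ico, ← sum_Ico_consecutive _ (Nat.zero_le (b - a)) (Nat.sub_le b a)]
  congr 1
  · rw [sum_const_nat fun j hj => ?_, Nat.card_Ico, Nat.sub_zero]
    rw [mem_Ico] at hj
    rw [delta_add_mul_of_add_lt hb (by omega)]
    exact if_congr (by omega) rfl rfl
  · rw [sum_const_nat fun j hj => ?_, Nat.card_Ico, Nat.sub_sub_self ha.le]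
    rw [mem_Ico] at hj
    rw [delta_add_mul_of_le_add hb ha hj.2 (by omega)]
    exact if_congr (by omega) rfl rfl

end Counting

def deltaFreq (b r : ℕ) (d : ℤ) (N : ℕ) : ℝ :=
  (((Finset.range N).filter fun n => delta b r n = d).card : ℝ) / N

def IsDigitMixture (b : ℕ) (μ : ℕ → ℤ → ℝ) : Prop :=
  ∀ q a, a < b → ∀ d,
    μ (a + b * q) d = ((b : ℝ) - a) / b * μ q (d - a) + (a : ℝ) / b * μ (q + 1) (d - ((a : ℤ) - b))

section Density

variable {b : ℕ} {μ : ℕ → ℤ → ℝ}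

lemma deltaFreq_add_mul (hb : 2 ≤ b) {a : ℕ} (ha : a < b) (q : ℕ) (d : ℤ) (N : ℕ) :
    deltaFreq b (a + b * q) d (b * N)
      = ((b : ℝ) - a) / b * deltaFreq b q (d - a) N
        + (a : ℝ) / b * deltaFreq b (q + 1) (d - ((a : ℤ) - b)) N := by
  rcases eq_or_ne N 0 with rfl | hN
  · simp [deltaFreq]
  have hb0 : (b : ℝ) ≠ 0 := by positivity
  simp only [deltaFreq, card_filter_delta_add_mul hb ha]
  push_cast [Nat.cast_sub ha.le]
  field_simp

lemma mu_nonneg (hμ : ∀ r d, Tendsto (deltaFreq b r d) atTop (𝓝 (μ r d))) (r : ℕ) (d : ℤ) :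
    0 ≤ μ r d :=
  ge_of_tendsto' (hμ r d) fun N => by unfold deltaFreq; positivity

lemma mu_zero (hμ : ∀ r d, Tendsto (deltaFreq b r d) atTop (𝓝 (μ r d))) (d : ℤ) :
    μ 0 d = if d = 0 then 1 else 0 := by
  refine tendsto_nhds_unique (hμ 0 d) (tendsto_const_nhds.congr' ?_)
  filter_upwards [eventually_ne_atTop 0] with N hN
  split_ifs with hd
  · simp [deltaFreq, delta, hd, hN]
  · simp [deltaFreq, delta, Ne.symm hd]

lemma isDigitMixture_of_tendsto (hb : 2 ≤ b)
    (hμ : ∀ r d, Tendsto (deltaFreq b r d) atTop (𝓝 (μ r d))) : IsDigitMixture b μ := by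
  intro q a ha d
  refine tendsto_nhds_unique ((hμ _ d).comp (tendsto_id.const_mul_atTop' (by omega : 0 < b))) ?_
  simpa only [Function.comp_def, id_eq, deltaFreq_add_mul hb ha] using
    ((hμ q _).const_mul _).add ((hμ (q + 1) _).const_mul _)

end Density

section Moments

variable {p : ℤ → ℝ}

lemma summable_of_summable_sq_mul (hp : ∀ d, 0 ≤ p d)
    (h : Summable fun d : ℤ => (d : ℝ) ^ 2 * p d) : Summable p := by
  refine h.of_norm_bounded_eventually ?_
  filter_upwards [eventually_cofinite_ne 0] with d hd
  have h1 : (1 : ℤ) ≤ d ^ 2 := by rcases lt_or_gt_of_ne hd with h | h <;> nlinarith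
  have h1' : (1 : ℝ) ≤ (d : ℝ) ^ 2 := by exact_mod_cast h1
  rw [Real.norm_of_nonneg (hp d)]
  nlinarith [hp d]

lemma summable_mul_of_summable_sq_mul (hp : ∀ d, 0 ≤ p d)
    (h : Summable fun d : ℤ => (d : ℝ) ^ 2 * p d) : Summable fun d : ℤ => (d : ℝ) * p d := by
  refine h.of_norm_bounded fun d => ?_
  have h1 : |(d : ℝ)| ≤ (d : ℝ) ^ 2 := by
    rcases eq_or_ne d 0 with rfl | hd
    · simp
    have : (1 : ℝ) ≤ |(d : ℝ)| := by exact_mod_cast Int.one_le_abs hd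
    rw [← sq_abs]
    nlinarith
  rw [norm_mul, Real.norm_eq_abs, Real.norm_of_nonneg (hp d)]
  exact mul_le_mul_of_nonneg_right h1 (hp d)

lemma hasSum_add_mul {m s : ℝ} (hm : HasSum p m) (hs : HasSum (fun d : ℤ => (d : ℝ) * p d) s)
    (t : ℤ) : HasSum (fun d : ℤ => ((d + t : ℤ) : ℝ) * p d) (s + t * m) := by
  convert hs.add (hm.mul_left (t : ℝ)) using 1
  funext d
  push_cast
  ring

lemma hasSum_add_sq_mul {v : ℝ} (hm : HasSum p 1) (hs : HasSum (fun d : ℤ => (d : ℝ) * p d) 0)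
    (hv : HasSum (fun d : ℤ => (d : ℝ) ^ 2 * p d) v) (t : ℤ) :
    HasSum (fun d : ℤ => ((d + t : ℤ) : ℝ) ^ 2 * p d) (v + t ^ 2) := by
  convert (hv.add (hs.mul_left (2 * (t : ℝ)))).add (hm.mul_left ((t : ℝ) ^ 2)) using 1
  · funext d
    push_cast
    ring
  · ring

lemma hasSum_mul_of_eq_mix {p₁ p₂ g : ℤ → ℝ} {c₁ c₂ x₁ x₂ : ℝ} {t₁ t₂ : ℤ}
    (hp : ∀ d, p d = c₁ * p₁ (d - t₁) + c₂ * p₂ (d - t₂))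
    (h₁ : HasSum (fun e => g (e + t₁) * p₁ e) x₁) (h₂ : HasSum (fun e => g (e + t₂) * p₂ e) x₂) :
    HasSum (fun d => g d * p d) (c₁ * x₁ + c₂ * x₂) := by
  have shift : ∀ {p' : ℤ → ℝ} {t : ℤ} {x : ℝ}, HasSum (fun e => g (e + t) * p' e) x →
      HasSum (fun d => g d * p' (d - t)) x := fun {_ t _} h => by
    simpa [Function.comp_def] using (Equiv.subRight t).hasSum_iff.2 h
  refine (((shift h₁).mul_left c₁).add ((shift h₂).mul_left c₂)).congr_fun fun d => ?_
  rw [hp]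
  ring

end Moments

section Mixture

variable {b : ℕ} {μ : ℕ → ℤ → ℝ}

lemma hasSum_one_of_mix (hb : 2 ≤ b) (hmix : IsDigitMixture b μ)
    (hsum : ∀ r, Summable (μ r)) (h0 : HasSum (μ 0) 1) (r : ℕ) : HasSum (μ r) 1 := by
  have hrec : ∀ q a, a < b → ∑' d, μ (a + b * q) d
      = ((b : ℝ) - a) / b * ∑' d, μ q d + (a : ℝ) / b * ∑' d, μ (q + 1) d := fun q a ha => by
    have h := hasSum_mul_of_eq_mix (g := fun _ => 1) (hmix q a ha)
      (by simpa using (hsum q).hasSum) (by simpa using (hsum (q + 1)).hasSum)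
    simp only [one_mul] at h
    exact h.tsum_eq
  have h := apply_eq_apply_zero_of_add_mul (f := fun r => ∑' d, μ r d) hb hrec r
  rw [h0.tsum_eq] at h
  exact h ▸ (hsum r).hasSum

lemma hasSum_mean_zero_of_mix (hb : 2 ≤ b) (hmix : IsDigitMixture b μ)
    (hmass : ∀ r, HasSum (μ r) 1) (hsum : ∀ r, Summable fun d : ℤ => (d : ℝ) * μ r d)
    (h0 : HasSum (fun d : ℤ => (d : ℝ) * μ 0 d) 0) (r : ℕ) :
    HasSum (fun d : ℤ => (d : ℝ) * μ r d) 0 := by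
  have hrec : ∀ q a, a < b → ∑' d : ℤ, (d : ℝ) * μ (a + b * q) d
      = ((b : ℝ) - a) / b * ∑' d : ℤ, (d : ℝ) * μ q d
        + (a : ℝ) / b * ∑' d : ℤ, (d : ℝ) * μ (q + 1) d := fun q a ha => by
    have hb0 : (b : ℝ) ≠ 0 := by positivity
    rw [(hasSum_mul_of_eq_mix (g := fun d : ℤ => (d : ℝ)) (hmix q a ha)
      (hasSum_add_mul (hmass q) (hsum q).hasSum _)
      (hasSum_add_mul (hmass (q + 1)) (hsum (q + 1)).hasSum _)).tsum_eq]
    field_simp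
    push_cast
    ring
  have h := apply_eq_apply_zero_of_add_mul (f := fun r => ∑' d : ℤ, (d : ℝ) * μ r d) hb hrec r
  rw [h0.tsum_eq] at h
  exact h ▸ (hsum r).hasSum

lemma variance_add_mul_of_mix {V : ℕ → ℝ} (hmix : IsDigitMixture b μ)
    (hmass : ∀ r, HasSum (μ r) 1) (hmean : ∀ r, HasSum (fun d : ℤ => (d : ℝ) * μ r d) 0)
    (hV : ∀ r, HasSum (fun d : ℤ => (d : ℝ) ^ 2 * μ r d) (V r)) (q a : ℕ) (ha : a < b) :
    V (a + b * q) = ((b : ℝ) - a) / b * V q + (a : ℝ) / b * V (q + 1) + a * ((b : ℝ) - a) := by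
  have hb0 : (b : ℝ) ≠ 0 := Nat.cast_ne_zero.2 (by omega)
  rw [(hV _).unique (hasSum_mul_of_eq_mix (g := fun d : ℤ => (d : ℝ) ^ 2) (hmix q a ha)
    (hasSum_add_sq_mul (hmass q) (hmean q) (hV q) _)
    (hasSum_add_sq_mul (hmass (q + 1)) (hmean (q + 1)) (hV (q + 1)) _))]
  field_simp
  push_cast
  ring

end Mixture

theorem variance_lower_bound_general (b : ℕ) (hb : 2 ≤ b)
    (μ : ℕ → ℤ → ℝ)
    (hμ : ∀ (r : ℕ) (d : ℤ),
      Tendsto (fun N : ℕ =>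
        (((Finset.range N).filter fun n => delta b r n = d).card : ℝ) / N)
        atTop (𝓝 (μ r d)))
    (V : ℕ → ℝ)
    (hV : ∀ r : ℕ, HasSum (fun d : ℤ => (d : ℝ) ^ 2 * μ r d) (V r))
    (r : ℕ) :
    (b : ℝ) / 4 * lamb b r ≤ V r := by
  have hnn := mu_nonneg hμ
  have hmix := isDigitMixture_of_tendsto hb hμ
  have hμ0 := mu_zero hμ
  have hsq r := (hV r).summable
  have hmoment0 : ∀ g : ℤ → ℝ, HasSum (fun d => g d * μ 0 d) (g 0) := fun g => by
    simpa [hμ0] using hasSum_single (f := fun d => g d * μ 0 d) 0 fun d hd => by simp [hμ0, hd]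
  have hmass := hasSum_one_of_mix hb hmix
    (fun r => summable_of_summable_sq_mul (hnn r) (hsq r)) (by simpa using hmoment0 1)
  have hmean := hasSum_mean_zero_of_mix hb hmix hmass
    (fun r => summable_mul_of_summable_sq_mul (hnn r) (hsq r))
    (by simpa using hmoment0 fun d : ℤ => (d : ℝ))
  refine lamb_le_of_variance_recursion hb ?_ (variance_add_mul_of_mix hmix hmass hmean hV) r
  simpa using (hV 0).unique (hmoment0 fun d => (d : ℝ) ^ 2)

/-- **Proposition (lower bound).** For every integer `r ≥ 1`, `Var(μ^(r)) ≥ (b/4)·λ(r)`,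
where `λ(r)` is the number of non-zero blocks in the base-`b` expansion of `r`. -/
theorem variance_lower_bound (b : ℕ) (hb : 2 ≤ b)
    (μ : ℕ → ℤ → ℝ)
    (hμ : ∀ (r : ℕ) (d : ℤ),
      Tendsto (fun N : ℕ =>
        (((Finset.range N).filter fun n => delta b r n = d).card : ℝ) / N)
        atTop (𝓝 (μ r d)))
    (V : ℕ → ℝ)
    (hV : ∀ r : ℕ, HasSum (fun d : ℤ => (d : ℝ) ^ 2 * μ r d) (V r))
    (r : ℕ) (hr : 1 ≤ r) :
    (b : ℝ) / 4 * lamb b r ≤ V r :=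
  variance_lower_bound_general b hb μ hμ V hV r
end
end

section
/- Let γ be the standard Gaussian measure N(0,1) on ℝ, let ε > 0, and for each t ∈ ℝ let h_t : ℝ → [0,1] be a measurable function with h_t(u) = 1 for all u ≤ t − ε and h_t(u) = 0 for all u ≥ t + ε. Then for every Borel probability measure ν on ℝ: sup_{t∈ℝ} |ν((−∞,t]) − γ((−∞,t])| ≤ sup_{t∈ℝ} |∫_ℝ h_t dν − ∫_ℝ h_t dγ| + 4ε/√(2π). -/
/-!
The function `h (t + ε)` lies between the indicators of `(-∞, t]` and `(-∞, t + 2ε]`, and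
`h (t - ε)` between those of `(-∞, t - 2ε]` and `(-∞, t]`. Integrating against `ν` and `γ`
sandwiches `ν(-∞, t] - γ(-∞, t]` between `∓ sup_s |∫ h s dν - ∫ h s dγ|` up to the `γ`-mass of
an interval of length `2ε`, which is at most `2ε/√(2π)` because the Gaussian density is bounded
by `1/√(2π)`.
-/

open MeasureTheory ProbabilityTheory Set Real
open scoped NNReal

section

variable {α : Type*} [MeasurableSpace α] {μ : Measure α} {g : α → ℝ}

lemma measureReal_le_integral_of_indicator_le [IsFiniteMeasure μ] {s : Set α}
    (hs : MeasurableSet s) (hg : Integrable g μ) (hsg : s.indicator 1 ≤ g) :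
    μ.real s ≤ ∫ x, g x ∂μ :=
  integral_indicator_one hs ▸ integral_mono ((integrable_const 1).indicator hs) hg hsg

lemma integral_le_measureReal_of_le_indicator [IsFiniteMeasure μ] {s : Set α}
    (hs : MeasurableSet s) (hg : Integrable g μ) (hgs : g ≤ s.indicator 1) :
    ∫ x, g x ∂μ ≤ μ.real s :=
  integral_indicator_one hs ▸ integral_mono hg ((integrable_const 1).indicator hs) hgs

lemma integrable_of_forall_mem_Icc [IsFiniteMeasure μ] (hg : Measurable g)
    (hg01 : ∀ x, g x ∈ Icc (0 : ℝ) 1) : Integrable g μ :=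
  .of_bound hg.aestronglyMeasurable 1 <| .of_forall fun x ↦ by
    rw [Real.norm_of_nonneg (hg01 x).1]; exact (hg01 x).2

lemma integral_mem_Icc_of_forall_mem_Icc [IsProbabilityMeasure μ] (hg : Measurable g)
    (hg01 : ∀ x, g x ∈ Icc (0 : ℝ) 1) : ∫ x, g x ∂μ ∈ Icc (0 : ℝ) 1 :=
  ⟨integral_nonneg fun x ↦ (hg01 x).1,
    (integral_mono (integrable_of_forall_mem_Icc hg hg01) (integrable_const 1)
      fun x ↦ (hg01 x).2).trans_eq (by simp)⟩

end

namespace ProbabilityTheory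

lemma gaussianPDFReal_le (μ : ℝ) (v : ℝ≥0) (x : ℝ) :
    gaussianPDFReal μ v x ≤ (√(2 * π * v))⁻¹ := by
  rw [gaussianPDFReal]
  refine mul_le_of_le_one_right (by positivity) (exp_le_one_iff.2 ?_)
  exact div_nonpos_of_nonpos_of_nonneg (neg_nonpos.2 (sq_nonneg _)) (by positivity)

lemma gaussianReal_real_Iic_sub_le (μ : ℝ) {v : ℝ≥0} (hv : v ≠ 0) {a b : ℝ} (hab : a ≤ b) :
    (gaussianReal μ v).real (Iic b) - (gaussianReal μ v).real (Iic a) ≤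
      (b - a) / √(2 * π * v) := by
  rw [← measureReal_sdiff (Iic_subset_Iic.2 hab) measurableSet_Iic, Iic_sdiff_Iic,
    measureReal_def, gaussianReal_apply_eq_integral μ hv, ENNReal.toReal_ofReal
      (setIntegral_nonneg measurableSet_Ioc fun x _ ↦ gaussianPDFReal_nonneg _ _ _)]
  calc ∫ x in Ioc a b, gaussianPDFReal μ v x
      ≤ ∫ _ in Ioc a b, (√(2 * π * v))⁻¹ :=
        setIntegral_mono_on (integrable_gaussianPDFReal μ v).integrableOn
          (integrableOn_const measure_Ioc_lt_top.ne) measurableSet_Ioc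
          fun x _ ↦ gaussianPDFReal_le μ v x
    _ = (b - a) / √(2 * π * v) := by
      rw [setIntegral_const, Real.volume_real_Ioc_of_le hab, smul_eq_mul, div_eq_mul_inv]

end ProbabilityTheory

theorem abs_measureReal_Iic_sub_le_of_smoothing {ν μ : Measure ℝ} [IsFiniteMeasure ν]
    [IsFiniteMeasure μ] {h : ℝ → ℝ → ℝ} {ε L S : ℝ} (hε : 0 ≤ ε)
    (hmeas : ∀ t, Measurable (h t)) (hrange : ∀ t u, h t u ∈ Icc (0 : ℝ) 1)
    (h1 : ∀ t u, u ≤ t - ε → h t u = 1) (h0 : ∀ t u, t + ε ≤ u → h t u = 0)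
    (hμ : ∀ a b, a ≤ b → μ.real (Iic b) - μ.real (Iic a) ≤ L * (b - a))
    (hS : ∀ t, |∫ u, h t u ∂ν - ∫ u, h t u ∂μ| ≤ S) (t : ℝ) :
    |ν.real (Iic t) - μ.real (Iic t)| ≤ S + 2 * L * ε := by
  have hint (m : Measure ℝ) [IsFiniteMeasure m] (a : ℝ) : Integrable (h a) m :=
    integrable_of_forall_mem_Icc (hmeas a) (hrange a)
  have lower (m : Measure ℝ) [IsFiniteMeasure m] (a : ℝ) :
      m.real (Iic (a - ε)) ≤ ∫ u, h a u ∂m :=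
    measureReal_le_integral_of_indicator_le measurableSet_Iic (hint m a) <|
      indicator_le' (fun u hu ↦ (h1 a u hu).ge) fun u _ ↦ (hrange a u).1
  have upper (m : Measure ℝ) [IsFiniteMeasure m] (a : ℝ) :
      ∫ u, h a u ∂m ≤ m.real (Iic (a + ε)) :=
    integral_le_measureReal_of_le_indicator measurableSet_Iic (hint m a) <|
      le_indicator (fun u _ ↦ (hrange a u).2) fun u hu ↦ (h0 a u (not_le.1 hu).le).le
  have hνμ := abs_le.1 (hS (t + ε))
  have hμν := abs_le.1 (hS (t - ε))
  have hν₁ := lower ν (t + ε)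
  have hν₂ := upper ν (t - ε)
  have hμ₁ := upper μ (t + ε)
  have hμ₂ := lower μ (t - ε)
  have hL₁ := hμ t (t + ε + ε) (by linarith)
  have hL₂ := hμ (t - ε - ε) t (by linarith)
  rw [add_sub_cancel_right] at hν₁
  rw [sub_add_cancel] at hν₂
  rw [abs_sub_le_iff]
  constructor <;> linarith

/-- **Lemma (smoothing of indicator functions).** Let `γ = N(0,1)` be the standard Gaussian
measure on `ℝ`, let `ε > 0`, and for each `t ∈ ℝ` let `h t : ℝ → [0,1]` be a measurable
function with `h t u = 1` for `u ≤ t - ε` and `h t u = 0` for `u ≥ t + ε`. Then for every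
Borel probability measure `ν` on `ℝ`:
`sup_t |ν((-∞,t]) - γ((-∞,t])| ≤ sup_t |∫ h t dν - ∫ h t dγ| + 4ε/√(2π)`. -/
theorem smoothing_indicator (ε : ℝ) (hε : 0 < ε)
    (h : ℝ → ℝ → ℝ)
    (hmeas : ∀ t, Measurable (h t))
    (hrange : ∀ t u, h t u ∈ Set.Icc (0 : ℝ) 1)
    (h1 : ∀ t u, u ≤ t - ε → h t u = 1)
    (h0 : ∀ t u, t + ε ≤ u → h t u = 0)
    (ν : Measure ℝ) [IsProbabilityMeasure ν] (t : ℝ) :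
    |(ν (Set.Iic t)).toReal - ((gaussianReal 0 1) (Set.Iic t)).toReal| ≤
      (⨆ t' : ℝ, |(∫ u, h t' u ∂ν) - ∫ u, h t' u ∂(gaussianReal 0 1)|) +
        4 * ε / Real.sqrt (2 * Real.pi) := by
  have hbdd :
      BddAbove (range fun t' ↦ |(∫ u, h t' u ∂ν) - ∫ u, h t' u ∂(gaussianReal 0 1)|) := by
    refine ⟨1, forall_mem_range.2 fun t' ↦ ?_⟩
    obtain ⟨hν₀, hν₁⟩ := integral_mem_Icc_of_forall_mem_Icc (μ := ν) (hmeas t') (hrange t')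
    obtain ⟨hγ₀, hγ₁⟩ :=
      integral_mem_Icc_of_forall_mem_Icc (μ := gaussianReal 0 1) (hmeas t') (hrange t')
    exact abs_sub_le_of_nonneg_of_le hν₀ hν₁ hγ₀ hγ₁
  have hγ (a b : ℝ) (hab : a ≤ b) :
      (gaussianReal 0 1).real (Iic b) - (gaussianReal 0 1).real (Iic a) ≤
        (√(2 * π))⁻¹ * (b - a) := by
    simpa [div_eq_inv_mul] using gaussianReal_real_Iic_sub_le 0 one_ne_zero hab
  calc _ ≤ _ + 2 * (√(2 * π))⁻¹ * ε :=
        abs_measureReal_Iic_sub_le_of_smoothing hε.le hmeas hrange h1 h0 hγ (le_ciSup hbdd) t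
    _ ≤ _ := by
      rw [mul_comm 2, mul_assoc, ← div_eq_inv_mul]
      gcongr
      linarith
end
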